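/- arXiv:0710.3216 — 4 statements merged into one kernel-verified Lean document; each statement's English description precedes it below -/
import Mathlib

section
/- There exists a bijection φ : Y_β ≃ ∏_{i=1}^n Gr(β_i, ℂ^m), where Gr(k, ℂ^m) denotes the set of k-dimensional ℂ-subspaces of EuclideanSpace ℂ (Fin m), such that for every 1 ≤ i ≤ n−1 with β_i + β_{i+1} ≤ m, φ maps the subset X_β^i := {(L_•) ∈ Y_β : z(L_{i+1}) ≤ L_{i−1}} onto the subset A_β^i := {(l_1, …, l_n) : l_i ≤ (l_{i+1})ᗮ} of tuples whose i-th and (i+1)-st members are orthogonal. (This is the bijection underlying the paper's diffeomorphism Y_β ≅ ∏_i Gr(β_i, m) carrying X_β^i to A_β^i.) -/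
open Module

/-- `Vsp m` models `ℂ^m ⊗ z^{-1}ℂ[z^{-1}]`: finitely supported sequences of vectors in `ℂ^m`,
the index `n` corresponding to `z^{-(n+1)}`. -/
abbrev Vsp (m : ℕ) : Type := ℕ →₀ (Fin m → ℂ)

/-- The shift operator `z`: `(z f)(n) = f (n+1)`. -/
noncomputable def zmap (m : ℕ) : Vsp m →ₗ[ℂ] Vsp m :=
  Finsupp.lcomapDomain Nat.succ Nat.succ_injective

/-- `Yset m n β` is the set of chains `⊥ = L 0 ≤ L 1 ≤ ⋯ ≤ L n` of finite-dimensional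
subspaces of `V` with `finrank (L i) = β 1 + ⋯ + β i` and `z (L i) ≤ L (i-1)`. -/
def Yset (m n : ℕ) (β : Fin n → ℕ) : Set (Fin (n + 1) → Submodule ℂ (Vsp m)) :=
  {L | L 0 = ⊥ ∧ ∀ i : Fin n,
      L i.castSucc ≤ L i.succ ∧
      FiniteDimensional ℂ (L i.succ) ∧
      Module.finrank ℂ (L i.succ) = ∑ j ∈ Finset.Iic i, β j ∧
      Submodule.map (zmap m) (L i.succ) ≤ L i.castSucc}

/-! For an idempotent `e` on `M`, the operator `twist e = (1 - e) + z e` on `V = ℕ →₀ M` commutes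
with `z`, has the right inverse `untwist e = (1 - e) + z⁻¹ e`, and its kernel is `range e` placed in
degree `0`. Fixing a projection `P a` onto every subspace `a`, a tuple `(a₀, …, aₙ₋₁)` gives the
chain `L_k = ker T_k` with `T_k = twist (P a_{k-1}) ∘ ⋯ ∘ twist (P a₀)`. Conversely the tuple is
peeled off the chain one step at a time: `T_k` only involves `a₀, …, a_{k-1}`, and `T_k` maps
`L_{k+1}` onto `a_k` placed in degree `0`. Under this bijection `z L_{k+2} ≤ L_k` says
`ker (twist (P a_{k+1}) ∘ twist (P a_k)) ≤ ker z`, i.e. `a_{k+1} ≤ ker (P a_k)`; for orthogonal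
projections this is the orthogonality of `a_k` and `a_{k+1}`.
-/

noncomputable section

open Submodule LinearMap Finsupp

section RightInverse

variable {R V W : Type*} [Ring R] [AddCommGroup V] [Module R V] [AddCommGroup W] [Module R W]
  {f : V →ₗ[R] W} {g : W →ₗ[R] V}

lemma comap_eq_ker_sup_map_of_comp_eq_id (h : f ∘ₗ g = LinearMap.id) (S : Submodule R W) :
    S.comap f = ker f ⊔ S.map g := by
  have hfg : ∀ w, f (g w) = w := fun w => DFunLike.congr_fun h w
  refine le_antisymm (fun x hx => ?_) (sup_le (ker_le_comap f) ?_)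
  · rw [← sub_add_cancel x (g (f x))]
    exact add_mem (mem_sup_left (by simp [hfg])) (mem_sup_right (mem_map_of_mem hx))
  · rintro _ ⟨w, hw, rfl⟩
    simpa [hfg] using hw

variable {K : Type*} [DivisionRing K] [Module K V] [Module K W] {f : V →ₗ[K] W} {g : W →ₗ[K] V}

lemma finiteDimensional_comap_of_comp_eq_id (h : f ∘ₗ g = LinearMap.id) (S : Submodule K W)
    [FiniteDimensional K (ker f)] [FiniteDimensional K S] : FiniteDimensional K (S.comap f) := by
  rw [comap_eq_ker_sup_map_of_comp_eq_id h]
  infer_instance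

lemma finrank_comap_of_comp_eq_id (h : f ∘ₗ g = LinearMap.id) (S : Submodule K W)
    [FiniteDimensional K (ker f)] [FiniteDimensional K S] :
    finrank K (S.comap f) = finrank K (ker f) + finrank K S := by
  have hfg : ∀ w, f (g w) = w := fun w => DFunLike.congr_fun h w
  have hg : Function.Injective g := Function.LeftInverse.injective hfg
  have hdisj : ker f ⊓ S.map g = ⊥ := by
    refine eq_bot_iff.2 ?_
    rintro _ ⟨hx, w, -, rfl⟩
    have hw : w = 0 := by simpa [hfg] using hx
    simp [hw]
  have := finrank_sup_add_finrank_inf_eq (ker f) (S.map g)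
  rw [hdisj, finrank_bot, add_zero, ← comap_eq_ker_sup_map_of_comp_eq_id h] at this
  rw [this, (equivMapOfInjective g hg S).finrank_eq]

end RightInverse

lemma map_comap_le_ker_iff_of_comp_comm {R V : Type*} [Semiring R] [AddCommMonoid V] [Module R V]
    {T s : Module.End R V} (hT : Function.Surjective T) (hc : s ∘ₗ T = T ∘ₗ s)
    (S : Submodule R V) : (S.comap T).map s ≤ ker T ↔ S ≤ ker s := by
  rw [← comap_bot, ← map_le_iff_le_comap, ← map_comp, ← hc, map_comp,
    map_comap_eq_of_surjective hT, map_le_iff_le_comap, comap_bot]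

namespace Finsupp

variable (R : Type*) {M : Type*} [Semiring R] [AddCommMonoid M] [Module R M]

/-- `zmap m` is `shiftDown ℂ` by definition. -/
def shiftDown : (ℕ →₀ M) →ₗ[R] (ℕ →₀ M) := lcomapDomain Nat.succ Nat.succ_injective

def shiftUp : (ℕ →₀ M) →ₗ[R] (ℕ →₀ M) := lmapDomain M R Nat.succ

variable {R}

@[simp] lemma shiftDown_apply (f : ℕ →₀ M) (n : ℕ) : shiftDown R f n = f (n + 1) := rfl

@[simp] lemma shiftUp_apply_zero (f : ℕ →₀ M) : shiftUp R f 0 = 0 :=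
  mapDomain_of_notMem_range _ _ (by simp)

@[simp] lemma shiftUp_apply_succ (f : ℕ →₀ M) (n : ℕ) : shiftUp R f (n + 1) = f n :=
  mapDomain_apply Nat.succ_injective f n

lemma ker_shiftDown : ker (shiftDown R (M := M)) = range (lsingle 0) := by
  ext f
  refine ⟨fun hf => ⟨f 0, ?_⟩, ?_⟩
  · ext (_ | n)
    · simp
    · simpa using (DFunLike.congr_fun hf n).symm
  · rintro ⟨v, rfl⟩
    ext n
    simp

end Finsupp

section Twist

variable {R M : Type*} [Ring R] [AddCommGroup M] [Module R M] (e : Module.End R M)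

def twist : Module.End R (ℕ →₀ M) :=
  mapRange.linearMap (1 - e) + shiftDown R ∘ₗ mapRange.linearMap e

def untwist : Module.End R (ℕ →₀ M) :=
  mapRange.linearMap (1 - e) + shiftUp R ∘ₗ mapRange.linearMap e

@[simp] lemma twist_apply (f : ℕ →₀ M) (n : ℕ) :
    twist e f n = f n - e (f n) + e (f (n + 1)) := by
  simp [twist]

@[simp] lemma untwist_apply_zero (f : ℕ →₀ M) : untwist e f 0 = f 0 - e (f 0) := by
  simp [untwist]

@[simp] lemma untwist_apply_succ (f : ℕ →₀ M) (n : ℕ) :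
    untwist e f (n + 1) = f (n + 1) - e (f (n + 1)) + e (f n) := by
  simp [untwist]

lemma shiftDown_comp_twist : shiftDown R ∘ₗ twist e = twist e ∘ₗ shiftDown R :=
  LinearMap.ext fun f => Finsupp.ext fun n => by simp

variable {e}

lemma twist_comp_untwist (he : IsIdempotentElem e) : twist e ∘ₗ untwist e = LinearMap.id := by
  have he' : ∀ v, e (e v) = e v := fun v => DFunLike.congr_fun he.eq v
  refine LinearMap.ext fun f => Finsupp.ext fun n => ?_
  cases n <;> simp [he']

lemma ker_twist (he : IsIdempotentElem e) : ker (twist e) = (range e).map (lsingle 0) := by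
  have he' : ∀ v, e (e v) = e v := fun v => DFunLike.congr_fun he.eq v
  ext f
  constructor
  · intro hf
    have hf' : ∀ n, f n - e (f n) + e (f (n + 1)) = 0 := fun n => by
      simpa using DFunLike.congr_fun hf n
    have hsucc : ∀ n, e (f (n + 1)) = 0 := fun n => by
      simpa [he'] using congrArg e (hf' n)
    have hfix : ∀ n, e (f n) = f n := fun n => by
      have := hf' n
      rwa [hsucc, add_zero, sub_eq_zero, eq_comm] at this
    refine ⟨f 0, ⟨f 0, hfix 0⟩, ?_⟩
    ext (_ | n)
    · simp
    · rw [← hfix (n + 1)]; simp [hsucc]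
  · rintro ⟨_, ⟨v, rfl⟩, rfl⟩
    ext (_ | n) <;> simp [he']

lemma shiftDown_comp_untwist_comp_lsingle_zero :
    shiftDown R ∘ₗ untwist e ∘ₗ lsingle 0 = lsingle 0 ∘ₗ e :=
  LinearMap.ext fun v => Finsupp.ext fun n => by rcases n with _ | n <;> simp

lemma ker_twist_comp_twist_le_ker_shiftDown_iff {f : Module.End R M} (he : IsIdempotentElem e)
    (hf : IsIdempotentElem f) : ker (twist f ∘ₗ twist e) ≤ ker (shiftDown R) ↔ range f ≤ ker e := by
  have hsingle : (range e).map (lsingle 0) ≤ ker (shiftDown R (M := M)) :=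
    ker_shiftDown (R := R) (M := M) ▸ map_le_range
  rw [ker_comp, ker_twist hf, comap_eq_ker_sup_map_of_comp_eq_id (twist_comp_untwist he),
    ker_twist he, sup_le_iff, and_iff_right hsingle, ← map_comp, map_le_iff_le_comap, ← ker_comp,
    shiftDown_comp_untwist_comp_lsingle_zero, ker_comp_of_ker_eq_bot _ (ker_lsingle 0)]

end Twist

section TwistChain

variable {R M : Type*} [Ring R] [AddCommGroup M] [Module R M] (e : ℕ → Module.End R M)

def twistProd : ℕ → Module.End R (ℕ →₀ M)
  | 0 => LinearMap.id
  | k + 1 => twist (e k) ∘ₗ twistProd k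

def untwistProd : ℕ → Module.End R (ℕ →₀ M)
  | 0 => LinearMap.id
  | k + 1 => untwistProd k ∘ₗ untwist (e k)

def twistChain (k : ℕ) : Submodule R (ℕ →₀ M) := ker (twistProd e k)

lemma shiftDown_comp_twistProd (k : ℕ) :
    shiftDown R ∘ₗ twistProd e k = twistProd e k ∘ₗ shiftDown R := by
  induction k with
  | zero => rfl
  | succ k ih =>
    simp only [twistProd, ← comp_assoc, shiftDown_comp_twist]
    rw [comp_assoc, ih, comp_assoc]

lemma twistChain_zero : twistChain e 0 = ⊥ := ker_id

lemma twistChain_le_succ (k : ℕ) : twistChain e k ≤ twistChain e (k + 1) :=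
  ker_le_ker_comp _ _

variable {e}

lemma twistProd_congr {e' : ℕ → Module.End R M} {k : ℕ} (h : ∀ j < k, e j = e' j) :
    twistProd e k = twistProd e' k := by
  induction k with
  | zero => rfl
  | succ k ih => rw [twistProd, twistProd, h k k.lt_succ_self, ih fun j hj => h j (by omega)]

lemma twistProd_comp_untwistProd (he : ∀ k, IsIdempotentElem (e k)) (k : ℕ) :
    twistProd e k ∘ₗ untwistProd e k = LinearMap.id := by
  induction k with
  | zero => rfl
  | succ k ih =>
    simp only [twistProd, untwistProd, comp_assoc]
    rw [← comp_assoc (untwist (e k)), ih, id_comp, twist_comp_untwist (he k)]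

lemma twistProd_surjective (he : ∀ k, IsIdempotentElem (e k)) (k : ℕ) :
    Function.Surjective (twistProd e k) :=
  Function.LeftInverse.surjective (DFunLike.congr_fun (twistProd_comp_untwistProd he k))

lemma twistChain_succ (he : ∀ k, IsIdempotentElem (e k)) (k : ℕ) :
    twistChain e (k + 1) = ((range (e k)).map (lsingle 0)).comap (twistProd e k) := by
  rw [twistChain, twistProd, ker_comp, ker_twist (he k)]

lemma map_twistProd_twistChain_succ (he : ∀ k, IsIdempotentElem (e k)) (k : ℕ) :
    (twistChain e (k + 1)).map (twistProd e k) = (range (e k)).map (lsingle 0) := by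
  rw [twistChain_succ he, map_comap_eq_of_surjective (twistProd_surjective he k)]

lemma map_shiftDown_twistChain_succ_le (he : ∀ k, IsIdempotentElem (e k)) (k : ℕ) :
    (twistChain e (k + 1)).map (shiftDown R) ≤ twistChain e k := by
  rw [twistChain_succ he, twistChain,
    map_comap_le_ker_iff_of_comp_comm (twistProd_surjective he k) (shiftDown_comp_twistProd e k),
    ker_shiftDown]
  exact map_le_range

lemma map_shiftDown_twistChain_add_two_le_iff (he : ∀ k, IsIdempotentElem (e k)) (k : ℕ) :
    (twistChain e (k + 2)).map (shiftDown R) ≤ twistChain e k ↔ range (e (k + 1)) ≤ ker (e k) := by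
  change (ker ((twist (e (k + 1)) ∘ₗ twist (e k)) ∘ₗ twistProd e k)).map _ ≤ _ ↔ _
  rw [ker_comp, twistChain,
    map_comap_le_ker_iff_of_comp_comm (twistProd_surjective he k) (shiftDown_comp_twistProd e k),
    ker_twist_comp_twist_le_ker_shiftDown_iff (he k) (he (k + 1))]

variable {K : Type*} [DivisionRing K] [Module K M] [FiniteDimensional K M]
  {e : ℕ → Module.End K M}

lemma finiteDimensional_twistChain (he : ∀ k, IsIdempotentElem (e k)) (k : ℕ) :
    FiniteDimensional K (twistChain e k) := by
  induction k with
  | zero => rw [twistChain_zero]; infer_instance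
  | succ k ih =>
    have : FiniteDimensional K (ker (twistProd e k)) := ih
    rw [twistChain_succ he]
    exact finiteDimensional_comap_of_comp_eq_id (twistProd_comp_untwistProd he k) _

lemma finrank_twistChain (he : ∀ k, IsIdempotentElem (e k)) (k : ℕ) :
    finrank K (twistChain e k) = ∑ j ∈ Finset.range k, finrank K (range (e j)) := by
  induction k with
  | zero => rw [twistChain_zero, finrank_bot, Finset.sum_range_zero]
  | succ k ih =>
    have : FiniteDimensional K (ker (twistProd e k)) := finiteDimensional_twistChain he k
    rw [twistChain_succ he, finrank_comap_of_comp_eq_id (twistProd_comp_untwistProd he k),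
      Finset.sum_range_succ, ← ih,
      ← (equivMapOfInjective _ (single_injective 0) (range (e k))).finrank_eq]
    rfl

end TwistChain

section Peel

variable {R M : Type*} [Ring R] [AddCommGroup M] [Module R M]
  (P : Submodule R M → Module.End R M) (L : ℕ → Submodule R (ℕ →₀ M))

/-- `peelOp P L k` is `twistProd (P ∘ peel P L) k` (see `peelOp_eq_twistProd`), with `peel` inlined
so that it is a plain recursion. -/
def peelOp : ℕ → Module.End R (ℕ →₀ M)
  | 0 => LinearMap.id
  | k + 1 => twist (P (((L (k + 1)).map (peelOp k)).comap (lsingle 0))) ∘ₗ peelOp k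

def peel (k : ℕ) : Submodule R M := ((L (k + 1)).map (peelOp P L k)).comap (lsingle 0)

lemma peelOp_eq_twistProd (k : ℕ) : peelOp P L k = twistProd (P ∘ peel P L) k := by
  induction k with
  | zero => rfl
  | succ k ih => rw [peelOp, twistProd, ← ih]; rfl

variable {P L}

lemma peel_eq_of_eq_twistChain (hP : ∀ a, IsIdempotentElem (P a)) (hPr : ∀ a, range (P a) = a)
    {n : ℕ} {a : ℕ → Submodule R M} (hL : ∀ k ≤ n, L k = twistChain (P ∘ a) k) {k : ℕ}
    (hk : k < n) : peel P L k = a k := by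
  have he : ∀ j, IsIdempotentElem ((P ∘ a) j) := fun j => hP (a j)
  have hpeel : ∀ j < n, peelOp P L j = twistProd (P ∘ a) j → peel P L j = a j := by
    intro j hj hop
    rw [peel, hop, hL (j + 1) hj, map_twistProd_twistChain_succ he,
      comap_map_eq_of_injective (single_injective 0), Function.comp_apply, hPr]
  have hop : ∀ j < n, peelOp P L j = twistProd (P ∘ a) j := by
    intro j hj
    induction j with
    | zero => rfl
    | succ j ih =>
      have ih := ih (by omega)
      change twist (P (peel P L j)) ∘ₗ peelOp P L j = _
      rw [hpeel j (by omega) ih, ih]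
      rfl
  exact hpeel k hk (hop k hk)

lemma twistChain_peel (hP : ∀ a, IsIdempotentElem (P a)) (hPr : ∀ a, range (P a) = a) {n : ℕ}
    (h0 : L 0 = ⊥) (hmono : ∀ k < n, L k ≤ L (k + 1))
    (hshift : ∀ k < n, (L (k + 1)).map (shiftDown R) ≤ L k) {k : ℕ} (hk : k ≤ n) :
    twistChain (P ∘ peel P L) k = L k := by
  induction k with
  | zero => rw [twistChain_zero, h0]
  | succ k ih =>
    set T := twistProd (P ∘ peel P L) k
    have hker : ker T = L k := ih (by omega)
    have hsingle : (L (k + 1)).map T ≤ range (lsingle 0) := by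
      rw [← ker_shiftDown (R := R), map_le_iff_le_comap, ← ker_comp, shiftDown_comp_twistProd,
        ker_comp, ← map_le_iff_le_comap, hker]
      exact hshift k (by omega)
    rw [twistChain_succ (e := P ∘ peel P L) (fun j => hP _), Function.comp_apply, hPr, peel,
      peelOp_eq_twistProd, map_comap_eq_of_le hsingle, comap_map_eq, hker,
      sup_eq_left.2 (hmono k (by omega))]

end Peel

section Euclidean

variable {m : ℕ}

abbrev euclideanEquiv (m : ℕ) : (Fin m → ℂ) ≃ₗ[ℂ] EuclideanSpace ℂ (Fin m) :=
  (WithLp.linearEquiv 2 ℂ (Fin m → ℂ)).symm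

def euclideanCompl (a : Submodule ℂ (Fin m → ℂ)) : Submodule ℂ (Fin m → ℂ) :=
  ((a.map (euclideanEquiv m).toLinearMap)ᗮ).comap (euclideanEquiv m).toLinearMap

lemma isCompl_euclideanCompl (a : Submodule ℂ (Fin m → ℂ)) : IsCompl a (euclideanCompl a) := by
  have := (orderIsoMapComap (euclideanEquiv m)).symm.isCompl
    (isCompl_orthogonal (a.map (euclideanEquiv m).toLinearMap))
  rwa [orderIsoMapComap_symm_apply, comap_map_eq_of_injective (euclideanEquiv m).injective] at this

def euclideanProj (a : Submodule ℂ (Fin m → ℂ)) : Module.End ℂ (Fin m → ℂ) :=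
  a.projection (euclideanCompl a) (isCompl_euclideanCompl a)

lemma isIdempotentElem_euclideanProj (a : Submodule ℂ (Fin m → ℂ)) :
    IsIdempotentElem (euclideanProj a) :=
  isIdempotentElem_projection _

lemma range_euclideanProj (a : Submodule ℂ (Fin m → ℂ)) : range (euclideanProj a) = a :=
  range_projection _

lemma range_euclideanProj_le_ker_iff (a b : Submodule ℂ (Fin m → ℂ)) :
    range (euclideanProj b) ≤ ker (euclideanProj a) ↔
      a.map (euclideanEquiv m).toLinearMap ≤ (b.map (euclideanEquiv m).toLinearMap)ᗮ := by
  rw [range_euclideanProj, euclideanProj, ker_projection, euclideanCompl,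
    ← map_le_iff_le_comap, le_orthogonal_iff_le_orthogonal]

end Euclidean

def grassmannianCongr {R V W : Type*} [Semiring R] [AddCommMonoid V] [Module R V]
    [AddCommMonoid W] [Module R W] (e : V ≃ₗ[R] W) (k : ℕ) :
    {a : Submodule R V // finrank R a = k} ≃ {b : Submodule R W // finrank R b = k} :=
  (orderIsoMapComap e).toEquiv.subtypeEquiv fun a => by
    rw [← e.finrank_map_eq a]
    rfl

lemma Fin.sum_Iic_eq_sum_range_extend {A : Type*} [AddCommMonoid A] {n : ℕ} (f : Fin n → A)
    (i : Fin n) :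
    ∑ j ∈ Finset.Iic i, f j = ∑ j ∈ Finset.range (i + 1), Function.extend Fin.val f 0 j := by
  rw [Nat.range_succ_eq_Iic, ← Fin.map_valEmbedding_Iic, Finset.sum_map]
  simp [Fin.val_injective.extend_apply]

section ChainEquiv

variable {m n : ℕ} {β : Fin n → ℕ} {P : Submodule ℂ (Fin m → ℂ) → Module.End ℂ (Fin m → ℂ)}

lemma twistChain_mem_Yset (hP : ∀ a, IsIdempotentElem (P a)) (hPr : ∀ a, range (P a) = a)
    (l : (i : Fin n) → {a : Submodule ℂ (Fin m → ℂ) // finrank ℂ a = β i}) :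
    (fun i : Fin (n + 1) => twistChain (P ∘ Function.extend Fin.val (fun i => (l i).1) ⊥) i) ∈
      Yset m n β := by
  have he : ∀ k, IsIdempotentElem ((P ∘ Function.extend Fin.val (fun i => (l i).1) ⊥) k) :=
    fun k => hP _
  refine ⟨twistChain_zero _, fun i => ⟨twistChain_le_succ _ _, finiteDimensional_twistChain he _,
    ?_, map_shiftDown_twistChain_succ_le he _⟩⟩
  change finrank ℂ (twistChain _ (i + 1)) = _
  rw [finrank_twistChain he, Fin.sum_Iic_eq_sum_range_extend]
  refine Finset.sum_congr rfl fun j hj => ?_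
  have hj : j < n := by have := Finset.mem_range.1 hj; omega
  rw [Function.comp_apply, hPr, show j = ((⟨j, hj⟩ : Fin n) : ℕ) from rfl,
    Fin.val_injective.extend_apply, Fin.val_injective.extend_apply]
  exact (l _).2

lemma twistChain_peel_extend (hP : ∀ a, IsIdempotentElem (P a)) (hPr : ∀ a, range (P a) = a)
    {L : Fin (n + 1) → Submodule ℂ (Vsp m)} (hL : L ∈ Yset m n β) {k : ℕ} (hk : k ≤ n) :
    twistChain (P ∘ peel P (Function.extend Fin.val L ⊥)) k = L ⟨k, by omega⟩ := by
  have hval : ∀ j (hj : j ≤ n), Function.extend Fin.val L ⊥ j = L ⟨j, by omega⟩ :=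
    fun j hj => Fin.val_injective.extend_apply L ⊥ ⟨j, by omega⟩
  rw [← hval k hk]
  refine twistChain_peel hP hPr (n := n) ?_ (fun j hj => ?_) (fun j hj => ?_) hk
  · rw [hval 0 (by omega)]
    exact hL.1
  · rw [hval j (by omega), hval (j + 1) (by omega)]
    exact (hL.2 ⟨j, hj⟩).1
  · rw [hval j (by omega), hval (j + 1) (by omega)]
    exact (hL.2 ⟨j, hj⟩).2.2.2

lemma finrank_peel_extend (hP : ∀ a, IsIdempotentElem (P a)) (hPr : ∀ a, range (P a) = a)
    {L : Fin (n + 1) → Submodule ℂ (Vsp m)} (hL : L ∈ Yset m n β) (i : Fin n) :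
    finrank ℂ (peel P (Function.extend Fin.val L ⊥) i) = β i := by
  set f := fun j => finrank ℂ (peel P (Function.extend Fin.val L ⊥) j)
  have hsum : ∀ k ≤ n, ∑ j ∈ Finset.range k, f j =
      ∑ j ∈ Finset.range k, Function.extend Fin.val β 0 j := by
    intro k hk
    have hrange : ∀ j, finrank ℂ (range ((P ∘ peel P (Function.extend Fin.val L ⊥)) j)) = f j :=
      fun j => by rw [Function.comp_apply, hPr]
    have := finrank_twistChain (fun j => hP _) (e := P ∘ peel P (Function.extend Fin.val L ⊥)) k
    simp only [hrange] at this
    rw [← this, twistChain_peel_extend hP hPr hL hk]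
    rcases k with _ | k
    · rw [show L ⟨0, _⟩ = ⊥ from hL.1, finrank_bot, Finset.sum_range_zero]
    · exact (hL.2 ⟨k, by omega⟩).2.2.1.trans (Fin.sum_Iic_eq_sum_range_extend β _)
  have := hsum (i + 1) i.2
  rw [Finset.sum_range_succ, Finset.sum_range_succ, hsum i i.2.le, add_right_inj,
    Fin.val_injective.extend_apply] at this
  exact this

lemma map_zmap_le_iff_of_mem_Yset (hP : ∀ a, IsIdempotentElem (P a))
    (hPr : ∀ a, range (P a) = a) {L : Fin (n + 1) → Submodule ℂ (Vsp m)} (hL : L ∈ Yset m n β)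
    {i : ℕ} (hi : i + 2 ≤ n) :
    (L ⟨i + 2, by omega⟩).map (zmap m) ≤ L ⟨i, by omega⟩ ↔
      range (P (peel P (Function.extend Fin.val L ⊥) (i + 1))) ≤
        ker (P (peel P (Function.extend Fin.val L ⊥) i)) := by
  rw [← twistChain_peel_extend hP hPr hL (k := i + 2) (by omega),
    ← twistChain_peel_extend hP hPr hL (k := i) (by omega)]
  exact map_shiftDown_twistChain_add_two_le_iff (fun j => hP _) i

def chainEquiv (P : Submodule ℂ (Fin m → ℂ) → Module.End ℂ (Fin m → ℂ))
    (hP : ∀ a, IsIdempotentElem (P a)) (hPr : ∀ a, range (P a) = a) :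
    Yset m n β ≃ ((i : Fin n) → {a : Submodule ℂ (Fin m → ℂ) // finrank ℂ a = β i}) where
  toFun L i := ⟨peel P (Function.extend Fin.val L.1 ⊥) i, finrank_peel_extend hP hPr L.2 i⟩
  invFun l := ⟨_, twistChain_mem_Yset hP hPr l⟩
  left_inv L := by
    refine Subtype.ext (funext fun i => ?_)
    refine (congrArg ker (twistProd_congr fun j hj => ?_)).trans
      (twistChain_peel_extend hP hPr L.2 i.is_le)
    have hj : j < n := by omega
    simp only [Function.comp_apply]
    rw [show j = ((⟨j, hj⟩ : Fin n) : ℕ) from rfl, Fin.val_injective.extend_apply]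
  right_inv l := by
    refine funext fun i => Subtype.ext ?_
    refine (peel_eq_of_eq_twistChain hP hPr (n := n) (fun k hk => ?_) i.2).trans
      (Fin.val_injective.extend_apply (fun i => (l i).1) ⊥ i)
    exact Fin.val_injective.extend_apply _ _ ⟨k, by omega⟩

end ChainEquiv

end

/-- There is a bijection `Y_β ≃ ∏ᵢ Gr(β_i, ℂ^m)` which, whenever `β_i + β_{i+1} ≤ m`, carries
the subset `X_β^i = {L : z(L_{i+1}) ≤ L_{i-1}}` onto the subset of tuples whose `i`-th and
`(i+1)`-st members are orthogonal.  (Here the paper's indices `1, …, n` are shifted to the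
0-based indices `0, …, n-1` of `Fin n`.) -/
theorem stmt1 (m n : ℕ) (β : Fin n → ℕ) :
    ∃ φ : ↥(Yset m n β) ≃
        ((i : Fin n) → {l : Submodule ℂ (EuclideanSpace ℂ (Fin m)) // finrank ℂ l = β i}),
      ∀ (i : ℕ) (hi : i + 1 < n), β ⟨i, by omega⟩ + β ⟨i + 1, hi⟩ ≤ m →
        ∀ L : ↥(Yset m n β),
          (Submodule.map (zmap m) (L.val ⟨i + 2, by omega⟩) ≤ L.val ⟨i, by omega⟩ ↔
            ((φ L) ⟨i, by omega⟩).val ≤ (((φ L) ⟨i + 1, hi⟩).val)ᗮ) := by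
  refine ⟨(chainEquiv euclideanProj isIdempotentElem_euclideanProj range_euclideanProj).trans
    (Equiv.piCongrRight fun i => grassmannianCongr (euclideanEquiv m) (β i)), ?_⟩
  intro i hi _ L
  rw [map_zmap_le_iff_of_mem_Yset isIdempotentElem_euclideanProj range_euclideanProj L.2 hi,
    range_euclideanProj_le_ker_iff]
  rfl
end

section
/- Gaussian elimination for cones: let A : X ⟶ Z, B : Y ⟶ Z, C : X ⟶ W, D : Y ⟶ W be morphisms in 𝒞 with D an isomorphism, and let f : X ⊞ Y ⟶ Z ⊞ W be the morphism with matrix components A, B, C, D (i.e. f = biprod.lift (biprod.desc A B) (biprod.desc C D)). If (X ⊞ Y →^f Z ⊞ W → E → (X ⊞ Y)[1]) is a distinguished triangle and (X →^{A − C ≫ D⁻¹ ≫ B} Z → E' → X[1]) is a distinguished triangle, then E ≅ E'. In other words, Cone(f) ≅ Cone(A − B D⁻¹ C). -/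
/-!
Row and column operations, i.e. unipotent automorphisms of `X ⊞ Y` and `Z ⊞ W`, conjugate the
matrix `(A B; C D)` into the diagonal map `D ⊕ (A - C D⁻¹ B)`, so both morphisms have isomorphic
cones. A direct sum of distinguished triangles is distinguished, and the cone of the isomorphism
`D` is zero, so the cone of `D ⊕ (A - C D⁻¹ B)` is the cone of the Schur complement.
-/

open CategoryTheory CategoryTheory.Limits CategoryTheory.Pretriangulated

namespace CategoryTheory

section Biproducts

variable {𝒞 : Type*} [Category 𝒞]

@[simps]
noncomputable def biprodIsoPi [HasZeroMorphisms 𝒞] (F : WalkingPair → 𝒞)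
    [HasBinaryBiproduct (F .left) (F .right)] [HasProduct F] :
    F .left ⊞ F .right ≅ ∏ᶜ F where
  hom := Pi.lift fun j => j.casesOn biprod.fst biprod.snd
  inv := biprod.lift (Pi.π F .left) (Pi.π F .right)
  hom_inv_id := by ext <;> simp
  inv_hom_id := by ext (_ | _) <;> simp

lemma biprodIsoPi_hom_naturality [HasZeroMorphisms 𝒞] [HasBinaryBiproducts 𝒞]
    {F G : WalkingPair → 𝒞} [HasProduct F] [HasProduct G] (φ : ∀ j, F j ⟶ G j) :
    biprod.map (φ .left) (φ .right) ≫ (biprodIsoPi G).hom =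
      (biprodIsoPi F).hom ≫ Limits.Pi.map φ := by
  ext (_ | _) <;> simp

lemma Biprod.nonempty_arrowIso_map_schurComplement [Preadditive 𝒞] [HasBinaryBiproducts 𝒞]
    {X Y Z W : 𝒞} (A : X ⟶ Z) (B : Y ⟶ Z) (C : X ⟶ W) (D : Y ⟶ W) [IsIso D] :
    Nonempty (Arrow.mk (biprod.lift (biprod.desc A B) (biprod.desc C D)) ≅
      Arrow.mk (biprod.map D (A - C ≫ inv D ≫ B))) := by
  let G := Biprod.gaussian' D B C A
  have hG : G.1.hom ≫ Biprod.ofComponents D B C A ≫ G.2.1.hom =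
      biprod.map D (A - C ≫ inv D ≫ B) := G.2.2.2
  exact ⟨Arrow.isoMk' _ (Biprod.ofComponents D B C A) (biprod.braiding X Y)
    (biprod.braiding Z W) (by ext <;> simp) ≪≫ Arrow.isoMk' _ _ G.1.symm G.2.1 (by simp [← hG])⟩

end Biproducts

section Triangles

variable {𝒞 : Type*} [Category 𝒞] [Preadditive 𝒞] [HasBinaryBiproducts 𝒞] [HasShift 𝒞 ℤ]
  [∀ n : ℤ, (shiftFunctor 𝒞 n).Additive]

noncomputable def Pretriangulated.biprodTriangle (T₁ T₂ : Triangle 𝒞) : Triangle 𝒞 :=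
  Triangle.mk (biprod.map T₁.mor₁ T₂.mor₁) (biprod.map T₁.mor₂ T₂.mor₂)
    (biprod.desc (T₁.mor₃ ≫ biprod.inl⟦(1 : ℤ)⟧') (T₂.mor₃ ≫ biprod.inr⟦(1 : ℤ)⟧'))

variable [HasZeroObject 𝒞] [Pretriangulated 𝒞]

lemma Pretriangulated.biprodTriangle_distinguished {T₁ T₂ : Triangle 𝒞}
    (h₁ : T₁ ∈ distTriang 𝒞) (h₂ : T₂ ∈ distTriang 𝒞) :
    biprodTriangle T₁ T₂ ∈ distTriang 𝒞 := by
  have : HasFiniteProducts 𝒞 :=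
    have : HasTerminal 𝒞 := HasZeroObject.hasTerminal
    hasFiniteProducts_of_has_binary_and_terminal
  -- For an abstract family `T` the objects `(T .left).objᵢ ⊞ (T .right).objᵢ` are syntactically
  -- the sources of `biprodIsoPi`; for `pairFunction T₁ T₂` they agree only after unfolding.
  suffices ∀ T : WalkingPair → Triangle 𝒞, (∀ j, T j ∈ distTriang 𝒞) →
      biprodTriangle (T .left) (T .right) ∈ distTriang 𝒞 from
    this (pairFunction T₁ T₂) (by rintro (_ | _) <;> assumption)
  intro T hT
  have comm₃ : biprod.desc ((T .left).mor₃ ≫ biprod.inl⟦(1 : ℤ)⟧')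
        ((T .right).mor₃ ≫ biprod.inr⟦(1 : ℤ)⟧') ≫ (biprodIsoPi fun j => (T j).obj₁).hom⟦1⟧' =
      (biprodIsoPi fun j => (T j).obj₃).hom ≫ Limits.Pi.map (fun j => (T j).mor₃) ≫
        inv (piComparison _ _) := by
    rw [← cancel_mono (piComparison _ _)]
    ext (_ | _) <;> simp [← Functor.map_comp]
  exact isomorphic_distinguished _ (productTriangle_distinguished T hT) _
    (Triangle.isoMk _ _ (biprodIsoPi fun j => (T j).obj₁) (biprodIsoPi fun j => (T j).obj₂)
      (biprodIsoPi fun j => (T j).obj₃) (biprodIsoPi_hom_naturality fun j => (T j).mor₁)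
      (biprodIsoPi_hom_naturality fun j => (T j).mor₂) comm₃)

end Triangles

end CategoryTheory

open ZeroObject in
/-- Gaussian elimination for cones: if `f : X ⊞ Y ⟶ Z ⊞ W` has matrix components
`A, B, C, D` with `D` an isomorphism, then any cone of `f` is isomorphic to any cone of
`A - C ≫ D⁻¹ ≫ B : X ⟶ Z`. -/
theorem stmt2 {𝒞 : Type*} [Category 𝒞] [Preadditive 𝒞] [HasZeroObject 𝒞]
    [HasBinaryBiproducts 𝒞] [HasShift 𝒞 ℤ] [∀ n : ℤ, (shiftFunctor 𝒞 n).Additive]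
    [Pretriangulated 𝒞]
    {X Y Z W E E' : 𝒞} (A : X ⟶ Z) (B : Y ⟶ Z) (C : X ⟶ W) (D : Y ⟶ W) [IsIso D]
    (g : Z ⊞ W ⟶ E) (h : E ⟶ (X ⊞ Y)⟦(1 : ℤ)⟧)
    (hT : Triangle.mk (biprod.lift (biprod.desc A B) (biprod.desc C D)) g h ∈ distTriang 𝒞)
    (g' : Z ⟶ E') (h' : E' ⟶ X⟦(1 : ℤ)⟧)
    (hT' : Triangle.mk (A - C ≫ inv D ≫ B) g' h' ∈ distTriang 𝒞) :
    Nonempty (E ≅ E') := by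
  obtain ⟨e⟩ := Biprod.nonempty_arrowIso_map_schurComplement A B C D
  have hD : Triangle.mk D (0 : W ⟶ 0) 0 ∈ distTriang 𝒞 :=
    (Triangle.distinguished_iff_of_isZero₃ _ (isZero_zero 𝒞)).2 ‹IsIso D›
  obtain ⟨eT, -⟩ := exists_iso_of_arrow_iso _ _ hT (biprodTriangle_distinguished hD hT') e
  exact ⟨Triangle.π₃.mapIso eT ≪≫ (isoZeroBiprod (isZero_zero 𝒞)).symm⟩
end

section
/- Suppose β_i = β_{i+1} = 1 for some 1 ≤ i ≤ n−1. Let (L_•) and (L'_•) be two chains in Y_β with L_j = L'_j for all j ≠ i and L_i ≠ L'_i. Then L_i ⊓ L'_i = L_{i−1} and z(L_{i+1}) ≤ L_{i−1}. (This is the claim that, away from the diagonal, the correspondence Z_β^i = {(L_•, L'_•) ∈ Y_β × Y_β : L_j = L'_j for j ≠ i} is contained in the locus V_β^i where z(L_{i+1}) ≤ L_{i−1}, i.e. Z_β^i = Δ ∪ V_β^i as sets.) -/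
open Module

set_option maxHeartbeats 2000000 in
/-- rank step lemma: along a chain in `Yset`, the rank increases by `β k` at each step. -/
lemma fin_Iic_zero (n : ℕ) (h : 0 < n) : Finset.Iic (⟨0, h⟩ : Fin n) = {⟨0, h⟩} := by
  ext j
  simp only [Finset.mem_Iic, Finset.mem_singleton, Fin.le_def, Fin.ext_iff]
  omega

lemma fin_Iic_succ (n k : ℕ) (hk : k + 1 < n) :
    Finset.Iic (⟨k + 1, hk⟩ : Fin n)
      = insert (⟨k + 1, hk⟩ : Fin n) (Finset.Iic ⟨k, by omega⟩) := by
  ext j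
  simp only [Finset.mem_Iic, Finset.mem_insert, Fin.le_def, Fin.ext_iff]
  omega

lemma fin_not_mem_Iic (n k : ℕ) (hk : k + 1 < n) :
    (⟨k + 1, hk⟩ : Fin n) ∉ Finset.Iic (⟨k, by omega⟩ : Fin n) := by
  simp only [Finset.mem_Iic, Fin.le_def]
  omega

lemma sum_Iic_succ (n k : ℕ) (hk : k + 1 < n) (β : Fin n → ℕ) :
    ∑ j ∈ Finset.Iic (⟨k + 1, hk⟩ : Fin n), β j
      = ∑ j ∈ Finset.Iic (⟨k, by omega⟩ : Fin n), β j + β ⟨k + 1, hk⟩ := by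
  rw [fin_Iic_succ n k hk, Finset.sum_insert (fin_not_mem_Iic n k hk)]
  exact Nat.add_comm _ _

/-- rank step lemma: along a chain in `Yset`, the rank increases by `β k` at each step. -/
lemma rank_step (m n : ℕ) (β : Fin n → ℕ) (L : Fin (n + 1) → Submodule ℂ (Vsp m))
    (hL : L ∈ Yset m n β) (k : ℕ) (hk : k < n) :
    Module.finrank ℂ (L ⟨k + 1, by omega⟩) = Module.finrank ℂ (L ⟨k, by omega⟩) + β ⟨k, hk⟩ := by
  obtain ⟨h0, hstep⟩ := hL
  cases k with
  | zero =>
    have h1 : Module.finrank ℂ (L ⟨0 + 1, by omega⟩) = ∑ j ∈ Finset.Iic ⟨0, hk⟩, β j :=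
      (hstep ⟨0, hk⟩).2.2.1
    have hz : (⟨0, by omega⟩ : Fin (n + 1)) = 0 := by ext; simp
    have hb : L ⟨0, by omega⟩ = ⊥ := by rw [hz]; exact h0
    have hr0 : Module.finrank ℂ (L ⟨0, by omega⟩) = 0 := by rw [hb, finrank_bot]
    have hsum : ∑ j ∈ Finset.Iic (⟨0, hk⟩ : Fin n), β j = β ⟨0, hk⟩ := by
      rw [fin_Iic_zero n hk, Finset.sum_singleton]
    exact h1.trans (hsum.trans (by rw [hr0, Nat.zero_add]))
  | succ k' =>
    have h1 : Module.finrank ℂ (L ⟨k' + 1 + 1, by omega⟩)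
        = ∑ j ∈ Finset.Iic ⟨k' + 1, hk⟩, β j := (hstep ⟨k' + 1, hk⟩).2.2.1
    have h2 : Module.finrank ℂ (L ⟨k' + 1, by omega⟩)
        = ∑ j ∈ Finset.Iic (⟨k', by omega⟩ : Fin n), β j := (hstep ⟨k', by omega⟩).2.2.1
    exact h1.trans ((sum_Iic_succ n k' hk β).trans
      (congrArg (· + β ⟨k' + 1, hk⟩) h2.symm))

/-- The key linear-algebra fact: two distinct subspaces covering a common subspace `A`
(each of rank `finrank A + 1`) intersect exactly in `A`. -/
lemma inf_eq_of_covers {W : Type*} [AddCommGroup W] [Module ℂ W]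
    (A B C : Submodule ℂ W) [FiniteDimensional ℂ B] [FiniteDimensional ℂ C]
    (hAB : A ≤ B) (hAC : A ≤ C)
    (hrB : Module.finrank ℂ B = Module.finrank ℂ A + 1)
    (hrC : Module.finrank ℂ C = Module.finrank ℂ A + 1)
    (hne : B ≠ C) : B ⊓ C = A := by
  by_contra hcon
  have hAD : A < B ⊓ C := lt_of_le_of_ne (le_inf hAB hAC) (Ne.symm hcon)
  haveI : FiniteDimensional ℂ ↥(B ⊓ C) :=
    Submodule.finiteDimensional_of_le (inf_le_left : B ⊓ C ≤ B)
  have h1 : Module.finrank ℂ A < Module.finrank ℂ ↥(B ⊓ C) :=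
    Submodule.finrank_lt_finrank_of_lt hAD
  have h2 : Module.finrank ℂ ↥(B ⊓ C) ≤ Module.finrank ℂ B := by
    rcases eq_or_lt_of_le (inf_le_left : B ⊓ C ≤ B) with h | h
    · rw [h]
    · exact le_of_lt (Submodule.finrank_lt_finrank_of_lt h)
  have hDB : B ⊓ C = B := Submodule.eq_of_le_of_finrank_eq inf_le_left (by omega)
  have hBC : B ≤ C := by rw [← hDB]; exact inf_le_right
  exact hne (Submodule.eq_of_le_of_finrank_eq hBC (by omega))

/-- If `β_i = β_{i+1} = 1` (paper indices; here the 0-based index is `i`), and `L, L'` are two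
chains in `Y_β` agreeing everywhere except in the `(i+1)`-st subspace, where they differ, then
`L_{i+1} ⊓ L'_{i+1} = L_i` and `z(L_{i+2}) ≤ L_i`. -/
theorem stmt3 (m n : ℕ) (hm : 2 ≤ m) (β : Fin n → ℕ)
    (hβ : ∀ j, 1 ≤ β j ∧ β j ≤ m - 1)
    (i : ℕ) (hi : i + 1 < n)
    (hβi : β ⟨i, by omega⟩ = 1) (hβi1 : β ⟨i + 1, hi⟩ = 1)
    (L L' : Fin (n + 1) → Submodule ℂ (Vsp m))
    (hL : L ∈ Yset m n β) (hL' : L' ∈ Yset m n β)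
    (heq : ∀ j : Fin (n + 1), j ≠ ⟨i + 1, by omega⟩ → L j = L' j)
    (hne : L ⟨i + 1, by omega⟩ ≠ L' ⟨i + 1, by omega⟩) :
    L ⟨i + 1, by omega⟩ ⊓ L' ⟨i + 1, by omega⟩ = L ⟨i, by omega⟩ ∧
    Submodule.map (zmap m) (L ⟨i + 2, by omega⟩) ≤ L ⟨i, by omega⟩ := by
  have hLA' : L ⟨i, by omega⟩ = L' ⟨i, by omega⟩ :=
    heq _ (Fin.ne_of_val_ne (Ne.symm (Nat.succ_ne_self i)))
  have hAB : L ⟨i, by omega⟩ ≤ L ⟨i + 1, by omega⟩ := (hL.2 ⟨i, by omega⟩).1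
  have hAC : L ⟨i, by omega⟩ ≤ L' ⟨i + 1, by omega⟩ :=
    (le_of_eq hLA').trans (hL'.2 ⟨i, by omega⟩).1
  haveI hBfd : FiniteDimensional ℂ (L ⟨i + 1, by omega⟩) := (hL.2 ⟨i, by omega⟩).2.1
  haveI hCfd : FiniteDimensional ℂ (L' ⟨i + 1, by omega⟩) := (hL'.2 ⟨i, by omega⟩).2.1
  have hrB : Module.finrank ℂ (L ⟨i + 1, by omega⟩)
      = Module.finrank ℂ (L ⟨i, by omega⟩) + 1 := by
    exact (rank_step m n β L hL i (by omega)).trans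
      (congrArg₂ (· + ·) rfl hβi)
  have hrC : Module.finrank ℂ (L' ⟨i + 1, by omega⟩)
      = Module.finrank ℂ (L ⟨i, by omega⟩) + 1 := by
    have hfr : Module.finrank ℂ (L' ⟨i, by omega⟩) = Module.finrank ℂ (L ⟨i, by omega⟩) :=
      (congrArg (fun S : Submodule ℂ (Vsp m) => Module.finrank ℂ S) hLA').symm
    exact (rank_step m n β L' hL' i (by omega)).trans
      (congrArg₂ (· + ·) hfr hβi)
  have key : L ⟨i + 1, by omega⟩ ⊓ L' ⟨i + 1, by omega⟩ = L ⟨i, by omega⟩ :=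
    inf_eq_of_covers _ _ _ hAB hAC hrB hrC hne
  refine ⟨key, ?_⟩
  have hz1 : Submodule.map (zmap m) (L ⟨i + 2, by omega⟩) ≤ L ⟨i + 1, by omega⟩ :=
    (hL.2 ⟨i + 1, hi⟩).2.2.2
  have hLL : L ⟨i + 2, by omega⟩ = L' ⟨i + 2, by omega⟩ :=
    heq _ (Fin.ne_of_val_ne (Nat.succ_ne_self (i + 1)))
  have hz2 : Submodule.map (zmap m) (L ⟨i + 2, by omega⟩) ≤ L' ⟨i + 1, by omega⟩ :=
    (le_of_eq (congrArg (Submodule.map (zmap m)) hLL)).trans (hL'.2 ⟨i + 1, hi⟩).2.2.2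
  exact (le_inf hz1 hz2).trans (le_of_eq key)
end

section
/- Automatic closedness under z for rank-one insertions: let (L_•) ∈ Y_β, let 1 ≤ i ≤ n−1, and let M be a ℂ-subspace of V with L_{i−1} ≤ M ≤ L_{i+1}, finrank_ℂ M = finrank_ℂ L_{i−1} + 1, and z(L_{i+1}) ≤ M. Then z(M) ≤ L_{i−1}. (Consequently, when the switched sequence s_i(β) has i-th entry equal to 1, the correspondence Z_β^i = {(L_•, L'_•) ∈ Y_β × Y_{s_i(β)} : L_j = L'_j for j ≠ i} is cut out inside the relative Grassmannian of subspaces L_{i−1} ≤ L'_i ≤ L_{i+1} by the single condition z(L_{i+1}) ≤ L'_i, the remaining condition z(L'_i) ≤ L_{i−1} being automatic; this is the key step in the paper's computation of the dualizing sheaf of Z_β^i.) -/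
open Module

set_option maxHeartbeats 1000000 in
set_option synthInstance.maxHeartbeats 200000 in
/-- Automatic closedness under `z` for rank-one insertions: if `L ∈ Y_β` and `M` is a subspace
with `L_i ≤ M ≤ L_{i+2}` (0-based chain indices; the paper's `L_{i-1} ≤ M ≤ L_{i+1}`),
`finrank M = finrank L_i + 1` and `z(L_{i+2}) ≤ M`, then `z(M) ≤ L_i`. -/
theorem stmt8 (m n : ℕ) (hm : 2 ≤ m) (β : Fin n → ℕ)
    (hβ : ∀ j, 1 ≤ β j ∧ β j ≤ m - 1)
    (i : ℕ) (hi : i + 1 < n)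
    (L : Fin (n + 1) → Submodule ℂ (Vsp m)) (hL : L ∈ Yset m n β)
    (M : Submodule ℂ (Vsp m))
    (hM1 : L ⟨i, by omega⟩ ≤ M) (hM2 : M ≤ L ⟨i + 2, by omega⟩)
    (hMrk : finrank ℂ M = finrank ℂ (L ⟨i, by omega⟩) + 1)
    (hMz : Submodule.map (zmap m) (L ⟨i + 2, by omega⟩) ≤ M) :
    Submodule.map (zmap m) M ≤ L ⟨i, by omega⟩ := by
  classical
  obtain ⟨h0, hchain⟩ := hL
  have hiFin : i < n := by omega
  -- pointwise behaviour of powers of z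
  have hpow : ∀ (K : ℕ) (f : Vsp m) (k : ℕ), ((zmap m) ^ K) f k = f (k + K) := by
    intro K
    induction K with
    | zero => intro f k; simp
    | succ K ih =>
      intro f k
      rw [pow_succ, Module.End.mul_apply, ih]
      rfl
  have hnil : ∀ f : Vsp m, ∃ K, ((zmap m) ^ K) f = 0 := by
    intro f
    refine ⟨(f.support.sup id) + 1, Finsupp.ext fun k => ?_⟩
    rw [hpow]
    have : k + (f.support.sup id + 1) ∉ f.support := by
      intro h
      have := Finset.le_sup (f := id) h
      simp only [id] at this
      omega
    simpa [Finsupp.mem_support_iff, not_not] using this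
  -- chain facts
  have h1 : L ⟨i, by omega⟩ ≤ L ⟨i + 1, by omega⟩ := (hchain ⟨i, hiFin⟩).1
  have h2 : Submodule.map (zmap m) (L ⟨i + 1, by omega⟩) ≤ L ⟨i, by omega⟩ :=
    (hchain ⟨i, hiFin⟩).2.2.2
  have hzLi : Submodule.map (zmap m) (L ⟨i, by omega⟩) ≤ L ⟨i, by omega⟩ :=
    le_trans (Submodule.map_mono h1) h2
  have hzLi' : ∀ u, u ∈ L ⟨i, by omega⟩ → zmap m u ∈ L ⟨i, by omega⟩ := fun u hu =>
    hzLi ⟨u, hu, rfl⟩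
  have hzM : Submodule.map (zmap m) M ≤ M := le_trans (Submodule.map_mono hM2) hMz
  have hzM' : ∀ u, u ∈ M → zmap m u ∈ M := fun u hu => hzM ⟨u, hu, rfl⟩
  have hfin2 : FiniteDimensional ℂ (L ⟨i + 2, by omega⟩) := (hchain ⟨i + 1, hi⟩).2.1
  have hfinM : FiniteDimensional ℂ M := Submodule.finiteDimensional_of_le hM2
  have key : ∀ x ∈ M, zmap m x ∈ L ⟨i, by omega⟩ := by
    by_contra hcon
    push_neg at hcon
    obtain ⟨x, hxM, hzx⟩ := hcon
    have hzxM : zmap m x ∈ M := hzM' x hxM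
    set N : Submodule ℂ (Vsp m) := L ⟨i, by omega⟩ ⊔ (ℂ ∙ zmap m x) with hN
    have hNM : N ≤ M :=
      sup_le hM1 ((Submodule.span_singleton_le_iff_mem _ _).2 hzxM)
    have hLltN : L ⟨i, by omega⟩ < N := by
      refine lt_of_le_of_ne le_sup_left ?_
      intro heq
      apply hzx
      rw [heq]
      exact Submodule.mem_sup_right (Submodule.mem_span_singleton_self _)
    have hfinN : FiniteDimensional ℂ N := Submodule.finiteDimensional_of_le hNM
    have hrkN : finrank ℂ M ≤ finrank ℂ N := by
      have := Submodule.finrank_lt_finrank_of_lt (K := ℂ)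
        (s := L ⟨i, by omega⟩) (t := N) hLltN
      omega
    have hMN : N = M := Submodule.eq_of_le_of_finrank_le hNM hrkN
    -- decompose z (z x)
    have hz2M : zmap m (zmap m x) ∈ N := by rw [hMN]; exact hzM' _ hzxM
    rw [Submodule.mem_sup] at hz2M
    obtain ⟨u, hu, v, hv, huv⟩ := hz2M
    obtain ⟨c, rfl⟩ := Submodule.mem_span_singleton.1 hv
    -- key induction
    have hind : ∀ k : ℕ, ((zmap m) ^ k) (zmap m x) - c ^ k • zmap m x ∈ L ⟨i, by omega⟩ := by
      intro k
      induction k with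
      | zero => simp
      | succ k ih =>
        have hmem : zmap m (((zmap m) ^ k) (zmap m x) - c ^ k • zmap m x) + c ^ k • u
            ∈ L ⟨i, by omega⟩ :=
          Submodule.add_mem _ (hzLi' _ ih) (Submodule.smul_mem _ _ hu)
        have hu' : u = zmap m (zmap m x) - c • zmap m x := by rw [← huv]; abel
        have heq : zmap m (((zmap m) ^ k) (zmap m x) - c ^ k • zmap m x) + c ^ k • u
            = ((zmap m) ^ (k + 1)) (zmap m x) - c ^ (k + 1) • zmap m x := by
          rw [map_sub, map_smul, hu', pow_succ', Module.End.mul_apply, pow_succ,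
            smul_sub, smul_smul]
          abel
        rwa [heq] at hmem
    obtain ⟨K, hK⟩ := hnil (zmap m x)
    have hcm : c ^ K • zmap m x ∈ L ⟨i, by omega⟩ := by
      have := hind K
      rw [hK] at this
      simpa using Submodule.neg_mem _ this
    have hc0 : c = 0 := by
      by_contra hc
      apply hzx
      have hKpos : K ≠ 0 := by
        intro hK0
        apply hzx
        rw [hK0] at hK
        simp at hK
        rw [hK]
        exact Submodule.zero_mem _
      have : (c ^ K)⁻¹ • (c ^ K • zmap m x) ∈ L ⟨i, by omega⟩ :=
        Submodule.smul_mem _ _ hcm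
      rwa [smul_smul, inv_mul_cancel₀ (pow_ne_zero _ hc), one_smul] at this
    have hz2 : zmap m (zmap m x) ∈ L ⟨i, by omega⟩ := by
      rw [← huv, hc0]
      simpa using hu
    -- now x itself lives in N = L_i + span (z x)
    have hxN : x ∈ N := by rw [hMN]; exact hxM
    rw [Submodule.mem_sup] at hxN
    obtain ⟨u', hu', v', hv', huv'⟩ := hxN
    obtain ⟨d, rfl⟩ := Submodule.mem_span_singleton.1 hv'
    apply hzx
    have hz' := congrArg (zmap m) huv'
    rw [map_add, map_smul] at hz'
    rw [← hz']
    exact Submodule.add_mem _ (hzLi' _ hu') (Submodule.smul_mem _ _ hz2)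
  rintro y ⟨w, hw, rfl⟩
  exact key w hw
end
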